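/- Let k be a field of characteristic zero, let α, β, α', β' be units of k⟦h⟧ and let n, m be natural numbers. Suppose some change of Weierstrass variables C = (u, r, s, t) over k((h)) transforms the Weierstrass curve y² = x³ + α hⁿ x + β hᵐ into y² = x³ + α' x + β'. Then, writing v = ν(u) for the h-adic valuation of u, one has n = 4v and m = 6v; in particular 3n = 2m and min(3n, 2m) is divisible by 12. -/

import Mathlib

/-- The Laurent series `h`, i.e. the image of the power series variable in `k((h))`. -/
noncomputable def hL (k : Type*) [Field k] : LaurentSeries k :=
  ((PowerSeries.X : PowerSeries k) : LaurentSeries k)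

section aux

variable {k : Type*} [Field k]

lemma coe_unit_ne_zero (α : (PowerSeries k)ˣ) :
    ((α : PowerSeries k) : LaurentSeries k) ≠ 0 := by
  intro hc
  have := HahnSeries.ofPowerSeries_injective (Γ := ℤ) (R := k)
    (by simpa using hc : HahnSeries.ofPowerSeries ℤ k (α : PowerSeries k)
        = HahnSeries.ofPowerSeries ℤ k 0)
  exact α.ne_zero this

lemma order_coe_unit (α : (PowerSeries k)ˣ) :
    ((α : PowerSeries k) : LaurentSeries k).order = 0 := by
  have h1 : ((α : PowerSeries k) : LaurentSeries k) *
      (((α⁻¹ : (PowerSeries k)ˣ) : PowerSeries k) : LaurentSeries k) = 1 := by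
    show HahnSeries.ofPowerSeries ℤ k _ * HahnSeries.ofPowerSeries ℤ k _ = 1
    rw [← map_mul]
    simp
  have horder : ((α : PowerSeries k) : LaurentSeries k).order +
      (((α⁻¹ : (PowerSeries k)ˣ) : PowerSeries k) : LaurentSeries k).order = 0 := by
    rw [← HahnSeries.order_mul (coe_unit_ne_zero α) (coe_unit_ne_zero α⁻¹), h1,
      HahnSeries.order_one]
  have hle : ∀ β : (PowerSeries k)ˣ, ((β : PowerSeries k) : LaurentSeries k).order ≤ 0 := by
    intro β
    have hcc : (PowerSeries.constantCoeff (R := k)) (β : PowerSeries k) ≠ 0 :=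
      (PowerSeries.isUnit_constantCoeff (β : PowerSeries k) β.isUnit).ne_zero
    have hc : ((β : PowerSeries k) : LaurentSeries k).coeff ((0 : ℕ) : ℤ) ≠ 0 := by
      rw [HahnSeries.ofPowerSeries_apply_coeff (β : PowerSeries k) 0]
      simpa using hcc
    have := HahnSeries.order_le_of_coeff_ne_zero hc
    simpa using this
  have h2 := hle α
  have h3 := hle α⁻¹
  omega

lemma order_u_inv (u : (LaurentSeries k)ˣ) :
    ((u⁻¹ : (LaurentSeries k)ˣ) : LaurentSeries k).order = -((u : LaurentSeries k)).order := by
  have h1 : (u : LaurentSeries k) * ((u⁻¹ : (LaurentSeries k)ˣ) : LaurentSeries k) = 1 :=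
    u.mul_inv
  have := HahnSeries.order_mul (x := (u : LaurentSeries k))
    (y := ((u⁻¹ : (LaurentSeries k)ˣ) : LaurentSeries k)) u.ne_zero u⁻¹.ne_zero
  rw [h1, HahnSeries.order_one] at this
  omega

lemma hL_eq_single : (hL k) = HahnSeries.single (1 : ℤ) (1 : k) := by
  show HahnSeries.ofPowerSeries ℤ k PowerSeries.X = _
  exact HahnSeries.ofPowerSeries_X

lemma order_hL_pow (n : ℕ) : ((hL k) ^ n).order = (n : ℤ) := by
  rw [hL_eq_single, HahnSeries.single_pow, HahnSeries.order_single (by simp)]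
  simp

end aux

/-- If `α, β, α', β'` are units of `k⟦h⟧` and some change of Weierstrass variables
`C = (u, r, s, t)` over `k((h))` transforms `y² = x³ + α hⁿ x + β hᵐ` into
`y² = x³ + α' x + β'`, then, with `v = ν(u)` the `h`-adic valuation of `u`, one has
`n = 4v` and `m = 6v`; in particular `3n = 2m` and `12 ∣ min (3n, 2m)`. -/
theorem stmt_4 (k : Type*) [Field k] [CharZero k] (α β α' β' : (PowerSeries k)ˣ)
    (n m : ℕ)
    (C : WeierstrassCurve.VariableChange (LaurentSeries k))
    (h : C • (WeierstrassCurve.mk 0 0 0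
        (((α : PowerSeries k) : LaurentSeries k) * hL k ^ n)
        (((β : PowerSeries k) : LaurentSeries k) * hL k ^ m)) =
      WeierstrassCurve.mk 0 0 0
        ((α' : PowerSeries k) : LaurentSeries k)
        ((β' : PowerSeries k) : LaurentSeries k)) :
    (n : ℤ) = 4 * (C.u : LaurentSeries k).order ∧
    (m : ℤ) = 6 * (C.u : LaurentSeries k).order ∧
    3 * n = 2 * m ∧ 12 ∣ min (3 * n) (2 * m) := by
  haveI hchar : CharZero (LaurentSeries k) :=
    charZero_of_injective_algebraMap (algebraMap k (LaurentSeries k)).injective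
  have huinv : ((C.u⁻¹ : (LaurentSeries k)ˣ) : LaurentSeries k) ≠ 0 := C.u⁻¹.ne_zero
  rw [WeierstrassCurve.variableChange_def, WeierstrassCurve.mk.injEq] at h
  obtain ⟨h1, h2, h3, h4, h6⟩ := h
  dsimp only at h1 h2 h3 h4 h6
  -- s = 0
  have hs : C.s = 0 := by
    rcases mul_eq_zero.mp h1 with h' | h'
    · exact absurd h' huinv
    · have : (2 : LaurentSeries k) * C.s = 0 := by rw [← h']; ring
      rcases mul_eq_zero.mp this with h'' | h''
      · exact absurd h'' two_ne_zero
      · exact h''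
  rw [hs] at h2
  have hr : C.r = 0 := by
    rcases mul_eq_zero.mp h2 with h' | h'
    · exact absurd (pow_eq_zero_iff (n := 2) (by norm_num) |>.mp h') huinv
    · have : (3 : LaurentSeries k) * C.r = 0 := by rw [← h']; ring
      rcases mul_eq_zero.mp this with h'' | h''
      · exact absurd h'' three_ne_zero
      · exact h''
  rw [hr] at h3
  have ht : C.t = 0 := by
    rcases mul_eq_zero.mp h3 with h' | h'
    · exact absurd (pow_eq_zero_iff (n := 3) (by norm_num) |>.mp h') huinv
    · have : (2 : LaurentSeries k) * C.t = 0 := by rw [← h']; ring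
      rcases mul_eq_zero.mp this with h'' | h''
      · exact absurd h'' two_ne_zero
      · exact h''
  simp only [hs, hr, ht] at h4 h6
  have h4' : ((C.u⁻¹ : (LaurentSeries k)ˣ) : LaurentSeries k) ^ 4 *
      (((α : PowerSeries k) : LaurentSeries k) * hL k ^ n)
      = ((α' : PowerSeries k) : LaurentSeries k) := by
    rw [← h4]; ring
  have h6' : ((C.u⁻¹ : (LaurentSeries k)ˣ) : LaurentSeries k) ^ 6 *
      (((β : PowerSeries k) : LaurentSeries k) * hL k ^ m)
      = ((β' : PowerSeries k) : LaurentSeries k) := by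
    rw [← h6]; ring
  -- take orders
  have hLne : ∀ j : ℕ, (hL k) ^ j ≠ 0 := fun j => pow_ne_zero j (by
    rw [hL_eq_single]
    exact HahnSeries.single_ne_zero one_ne_zero)
  have key : ∀ (γ γ' : (PowerSeries k)ˣ) (j e : ℕ),
      ((C.u⁻¹ : (LaurentSeries k)ˣ) : LaurentSeries k) ^ e *
        (((γ : PowerSeries k) : LaurentSeries k) * hL k ^ j)
        = ((γ' : PowerSeries k) : LaurentSeries k) →
      (j : ℤ) = e * (C.u : LaurentSeries k).order := by
    intro γ γ' j e heq
    have hne1 : ((C.u⁻¹ : (LaurentSeries k)ˣ) : LaurentSeries k) ^ e ≠ 0 :=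
      pow_ne_zero e huinv
    have hne2 : (((γ : PowerSeries k) : LaurentSeries k) * hL k ^ j) ≠ 0 :=
      mul_ne_zero (coe_unit_ne_zero γ) (hLne j)
    have horder := congrArg HahnSeries.order heq
    rw [HahnSeries.order_mul hne1 hne2,
      HahnSeries.order_mul (coe_unit_ne_zero γ) (hLne j),
      HahnSeries.order_pow, order_coe_unit, order_coe_unit, order_hL_pow,
      order_u_inv] at horder
    rw [nsmul_eq_mul, mul_neg] at horder
    linarith
  have hn := key α α' n 4 h4'
  have hm := key β β' m 6 h6'
  push_cast at hn hm
  clear h1 h2 h3 h4 h6 h4' h6' key hs hr ht huinv hLne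
  refine ⟨by exact_mod_cast hn, by exact_mod_cast hm, ?_, ?_⟩
  · have : (3 * n : ℤ) = (2 * m : ℤ) := by linarith
    exact_mod_cast this
  · have hv : 0 ≤ (C.u : LaurentSeries k).order := by
      have : (0 : ℤ) ≤ (n : ℤ) := Int.natCast_nonneg n
      linarith
    have heq12 : 3 * (n : ℤ) = 12 * (C.u : LaurentSeries k).order := by linarith
    have hd : (12 : ℤ) ∣ 3 * (n : ℤ) := Dvd.intro _ heq12.symm
    have h12 : 12 ∣ 3 * n := by exact_mod_cast hd
    have h3n : 3 * n ≤ 2 * m := by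
      have : (3 * n : ℤ) = (2 * m : ℤ) := by linarith
      omega
    rw [min_eq_left h3n]
    exact h12
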